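/- arXiv:2601.20226 — 4 statements merged into one kernel-verified Lean document; each statement's English description precedes it below -/
import Mathlib

section
/- Fix x₁, x₂ ∈ ℝ. If Φ₂(x₂) > Φ₁(x₁) (i.e. the spread at zero transfer is strictly positive), then there exists q ∈ (0, q_M] with f(q; x₁, x₂) > 0; consequently sup_{q ∈ [0, q_M]} f(q; x₁, x₂) > 0 and every maximizer q* of f(·; x₁, x₂) over [0, q_M] satisfies q* > 0. -/
/-!
Pick a price `p` strictly between `Φ₁ x₁` and `Φ₂ x₂`. Since `Γᵢ` is strictly decreasing and
`Γᵢ ∘ Φᵢ = id`, the condition `p < Φ₂ (x₂ + q)` is equivalent to `x₂ + q < Γ₂ p`, an open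
condition holding at `q = 0`; likewise for `Φ₁ (x₁ - q) < p`. So the spread stays positive for
all small `q > 0`, and the revenue `q · spread` is positive there. The revenue vanishes at
`q = 0`, so no maximizer is `0`, and it is bounded on `[0, q_M]` because the spread decreases
in `q`, so its supremum is positive.
-/

open Filter Topology Set

namespace StrictAnti

variable {Γ Φ : ℝ → ℝ}

theorem lt_apply_iff_of_leftInverse (hΓ : StrictAnti Γ) (h : Function.LeftInverse Γ Φ)
    {p y : ℝ} : p < Φ y ↔ y < Γ p := by
  rw [← hΓ.lt_iff_gt, h]

theorem apply_lt_iff_of_leftInverse (hΓ : StrictAnti Γ) (h : Function.LeftInverse Γ Φ)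
    {p y : ℝ} : Φ y < p ↔ Γ p < y := by
  rw [← hΓ.lt_iff_gt, h]

theorem strictAnti_of_leftInverse (hΓ : StrictAnti Γ) (h : Function.LeftInverse Γ Φ) :
    StrictAnti Φ := fun a b hab => by
  rwa [hΓ.apply_lt_iff_of_leftInverse h, h]

end StrictAnti

theorem eventually_spread_pos {Γ₁ Γ₂ Φ₁ Φ₂ : ℝ → ℝ} (hΓ₁ : StrictAnti Γ₁) (hΓ₂ : StrictAnti Γ₂)
    (h₁ : Function.LeftInverse Γ₁ Φ₁) (h₂ : Function.LeftInverse Γ₂ Φ₂) {x₁ x₂ : ℝ}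
    (hspread : Φ₁ x₁ < Φ₂ x₂) : ∀ᶠ q in 𝓝 0, Φ₁ (x₁ - q) < Φ₂ (x₂ + q) := by
  obtain ⟨p, hp₁, hp₂⟩ := exists_between hspread
  rw [hΓ₁.apply_lt_iff_of_leftInverse h₁] at hp₁
  rw [hΓ₂.lt_apply_iff_of_leftInverse h₂] at hp₂
  have hsub : ∀ᶠ q in 𝓝 (0 : ℝ), Γ₁ p < x₁ - q :=
    continuousAt_const.eventually_lt (by fun_prop) (by simpa using hp₁)
  have hadd : ∀ᶠ q in 𝓝 (0 : ℝ), x₂ + q < Γ₂ p :=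
    ContinuousAt.eventually_lt (by fun_prop) continuousAt_const (by simpa using hp₂)
  filter_upwards [hsub, hadd] with q hq₁ hq₂
  exact ((hΓ₁.apply_lt_iff_of_leftInverse h₁).2 hq₁).trans
    ((hΓ₂.lt_apply_iff_of_leftInverse h₂).2 hq₂)

theorem bddAbove_revenue {Φ₁ Φ₂ : ℝ → ℝ} (hΦ₁ : Antitone Φ₁) (hΦ₂ : Antitone Φ₂)
    (q_M x₁ x₂ : ℝ) :
    BddAbove ((fun q : ℝ => q * (Φ₂ (x₂ + q) - Φ₁ (x₁ - q))) '' Icc 0 q_M) := by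
  refine ⟨q_M * |Φ₂ x₂ - Φ₁ x₁|, ?_⟩
  rintro _ ⟨q, ⟨hq₀, hqM⟩, rfl⟩
  have hspread : Φ₂ (x₂ + q) - Φ₁ (x₁ - q) ≤ Φ₂ x₂ - Φ₁ x₁ :=
    sub_le_sub (hΦ₂ (by linarith)) (hΦ₁ (by linarith))
  calc q * (Φ₂ (x₂ + q) - Φ₁ (x₁ - q)) ≤ q * |Φ₂ x₂ - Φ₁ x₁| :=
        mul_le_mul_of_nonneg_left (hspread.trans (le_abs_self _)) hq₀
    _ ≤ q_M * |Φ₂ x₂ - Φ₁ x₁| := mul_le_mul_of_nonneg_right hqM (abs_nonneg _)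

theorem stmt_9_general
    (Γ₁ Γ₂ Φ₁ Φ₂ : ℝ → ℝ)
    (hΓ₁a : StrictAnti Γ₁)
    (hΓ₂a : StrictAnti Γ₂)
    (hΦ₁l : ∀ y, Γ₁ (Φ₁ y) = y)
    (hΦ₂l : ∀ y, Γ₂ (Φ₂ y) = y)
    (q_M : ℝ) (hq_M : 0 < q_M) (x₁ x₂ : ℝ)
    (hspread : Φ₁ x₁ < Φ₂ x₂) :
    (∃ q ∈ Set.Ioc (0 : ℝ) q_M, 0 < q * (Φ₂ (x₂ + q) - Φ₁ (x₁ - q))) ∧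
    0 < sSup ((fun q : ℝ => q * (Φ₂ (x₂ + q) - Φ₁ (x₁ - q))) '' Set.Icc (0 : ℝ) q_M) ∧
    (∀ qs ∈ Set.Icc (0 : ℝ) q_M,
      (∀ q ∈ Set.Icc (0 : ℝ) q_M,
        q * (Φ₂ (x₂ + q) - Φ₁ (x₁ - q)) ≤ qs * (Φ₂ (x₂ + qs) - Φ₁ (x₁ - qs))) →
      0 < qs) := by
  obtain ⟨q, hq, hpos⟩ : ∃ q ∈ Ioc (0 : ℝ) q_M, 0 < q * (Φ₂ (x₂ + q) - Φ₁ (x₁ - q)) := by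
    obtain ⟨q, hspread_q, hq⟩ :=
      ((eventually_spread_pos hΓ₁a hΓ₂a hΦ₁l hΦ₂l hspread).filter_mono nhdsWithin_le_nhds
        |>.and (Ioc_mem_nhdsGT hq_M)).exists
    exact ⟨q, hq, mul_pos hq.1 (sub_pos.2 hspread_q)⟩
  have hbdd := bddAbove_revenue (hΓ₁a.strictAnti_of_leftInverse hΦ₁l).antitone
    (hΓ₂a.strictAnti_of_leftInverse hΦ₂l).antitone q_M x₁ x₂
  refine ⟨⟨q, hq, hpos⟩, hpos.trans_le (le_csSup hbdd ⟨q, Ioc_subset_Icc_self hq, rfl⟩), ?_⟩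
  rintro qs ⟨hqs₀, -⟩ hmax
  refine hqs₀.lt_of_ne fun hqs => ?_
  have := hmax q (Ioc_subset_Icc_self hq)
  rw [← hqs, zero_mul] at this
  exact this.not_gt hpos

/-- If the spread at zero transfer is strictly positive, `Φ₂ x₂ > Φ₁ x₁`, then there is
`q ∈ (0, q_M]` with strictly positive revenue, the supremum of the revenue over `[0, q_M]`
is strictly positive, and every maximizer over `[0, q_M]` is strictly positive. -/
theorem stmt_9
    (Γ₁ Γ₂ Φ₁ Φ₂ : ℝ → ℝ)
    (hΓ₁c : Continuous Γ₁) (hΓ₁a : StrictAnti Γ₁) (hΓ₁s : Function.Surjective Γ₁)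
    (hΓ₂c : Continuous Γ₂) (hΓ₂a : StrictAnti Γ₂) (hΓ₂s : Function.Surjective Γ₂)
    (hΦ₁l : ∀ y, Γ₁ (Φ₁ y) = y) (hΦ₁r : ∀ p, Φ₁ (Γ₁ p) = p)
    (hΦ₂l : ∀ y, Γ₂ (Φ₂ y) = y) (hΦ₂r : ∀ p, Φ₂ (Γ₂ p) = p)
    (q_M : ℝ) (hq_M : 0 < q_M) (x₁ x₂ : ℝ)
    (hspread : Φ₁ x₁ < Φ₂ x₂) :
    (∃ q ∈ Set.Ioc (0 : ℝ) q_M, 0 < q * (Φ₂ (x₂ + q) - Φ₁ (x₁ - q))) ∧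
    0 < sSup ((fun q : ℝ => q * (Φ₂ (x₂ + q) - Φ₁ (x₁ - q))) '' Set.Icc (0 : ℝ) q_M) ∧
    (∀ qs ∈ Set.Icc (0 : ℝ) q_M,
      (∀ q ∈ Set.Icc (0 : ℝ) q_M,
        q * (Φ₂ (x₂ + q) - Φ₁ (x₁ - q)) ≤ qs * (Φ₂ (x₂ + qs) - Φ₁ (x₁ - qs))) →
      0 < qs) :=
  stmt_9_general Γ₁ Γ₂ Φ₁ Φ₂ hΓ₁a hΓ₂a hΦ₁l hΦ₂l q_M hq_M x₁ x₂ hspread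
end

section
/- Fix x₁, x₂ ∈ ℝ. If q* ∈ (0, q_M) satisfies the first-order condition P₂(q*) − P₁(q*) = −q* · (1/Γ₂'(P₂(q*)) + 1/Γ₁'(P₁(q*))), then the realized spread is strictly positive, P₂(q*) − P₁(q*) > 0, and consequently the realized revenue is strictly positive, f(q*; x₁, x₂) = q* · (P₂(q*) − P₁(q*)) > 0. -/
theorem pos_of_eq_neg_mul_one_div_add_one_div {s q a b : ℝ} (hq : 0 < q) (ha : a < 0)
    (hb : b < 0) (h : s = -(q * (1 / a + 1 / b))) : 0 < s := by
  have hsum : 1 / a + 1 / b < 0 := add_neg (one_div_neg.mpr ha) (one_div_neg.mpr hb)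
  rw [h, neg_pos]
  exact mul_neg_of_pos_of_neg hq hsum

theorem stmt_12_general
    (Γ₁ Γ₂ Φ₁ Φ₂ : ℝ → ℝ)
    (hΓ₁' : ∀ p, deriv Γ₁ p < 0)
    (hΓ₂' : ∀ p, deriv Γ₂ p < 0)
    (q_M : ℝ) (x₁ x₂ : ℝ)
    (qs : ℝ) (hqs : qs ∈ Set.Ioo (0 : ℝ) q_M)
    (hFOC : Φ₂ (x₂ + qs) - Φ₁ (x₁ - qs)
      = -(qs * (1 / deriv Γ₂ (Φ₂ (x₂ + qs)) + 1 / deriv Γ₁ (Φ₁ (x₁ - qs))))) :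
    0 < Φ₂ (x₂ + qs) - Φ₁ (x₁ - qs) ∧
    0 < qs * (Φ₂ (x₂ + qs) - Φ₁ (x₁ - qs)) := by
  have hspread : 0 < Φ₂ (x₂ + qs) - Φ₁ (x₁ - qs) :=
    pos_of_eq_neg_mul_one_div_add_one_div hqs.1 (hΓ₂' _) (hΓ₁' _) hFOC
  exact ⟨hspread, mul_pos hqs.1 hspread⟩

/-- If `q* ∈ (0, q_M)` satisfies the first-order condition, then the realized spread is
strictly positive and the realized revenue `f(q*; x₁, x₂)` is strictly positive. -/
theorem stmt_12
    (Γ₁ Γ₂ Φ₁ Φ₂ : ℝ → ℝ)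
    (hΓ₁d : ContDiff ℝ 1 Γ₁) (hΓ₁' : ∀ p, deriv Γ₁ p < 0) (hΓ₁s : Function.Surjective Γ₁)
    (hΓ₂d : ContDiff ℝ 1 Γ₂) (hΓ₂' : ∀ p, deriv Γ₂ p < 0) (hΓ₂s : Function.Surjective Γ₂)
    (hΦ₁l : ∀ y, Γ₁ (Φ₁ y) = y) (hΦ₁r : ∀ p, Φ₁ (Γ₁ p) = p)
    (hΦ₂l : ∀ y, Γ₂ (Φ₂ y) = y) (hΦ₂r : ∀ p, Φ₂ (Γ₂ p) = p)
    (q_M : ℝ) (hq_M : 0 < q_M) (x₁ x₂ : ℝ)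
    (qs : ℝ) (hqs : qs ∈ Set.Ioo (0 : ℝ) q_M)
    (hFOC : Φ₂ (x₂ + qs) - Φ₁ (x₁ - qs)
      = -(qs * (1 / deriv Γ₂ (Φ₂ (x₂ + qs)) + 1 / deriv Γ₁ (Φ₁ (x₁ - qs))))) :
    0 < Φ₂ (x₂ + qs) - Φ₁ (x₁ - qs) ∧
    0 < qs * (Φ₂ (x₂ + qs) - Φ₁ (x₁ - qs)) :=
  stmt_12_general Γ₁ Γ₂ Φ₁ Φ₂ hΓ₁' hΓ₂' q_M x₁ x₂ qs hqs hFOC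
end

section
/- (Supremum–integral exchange.) Let π₁ and π₂ be probability measures on ℝ that are absolutely continuous with respect to Lebesgue measure, and let μ = π₁ ⊗ π₂ on ℝ². Assume the envelope (x₁, x₂) ↦ sup_{q ∈ [0, q_M]} |f(q; x₁, x₂)| is μ-integrable. Then the supremum, over all Borel measurable policies q : ℝ² → [0, q_M], of the expected revenue ∫ f(q(x₁, x₂); x₁, x₂) dμ(x₁, x₂) equals the integral of the pointwise suprema, ∫ (sup_{q ∈ [0, q_M]} f(q; x₁, x₂)) dμ(x₁, x₂). -/
/-!
The inverse demand functions `Φᵢ` are antitone bijections of `ℝ`, hence continuous, so the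
revenue `f(q; x)` is continuous in `q` and measurable in `x`. Every policy is dominated
pointwise by the pointwise supremum `g`, which bounds the left side by `∫ g`. Conversely, along
a dense sequence `(uₖ)` of `[0, q_M]` the finite maxima `maxₖ≤ₙ f(uₖ; x)` are attained by
measurable policies (take the first maximiser) and increase to `g(x)`; dominated convergence
under the integrable envelope makes their expected revenues converge to `∫ g`.
-/

open MeasureTheory Filter Set Topology Function TopologicalSpace

theorem StrictAnti.continuous_of_leftInverse {α β : Type*} [LinearOrder α]
    [TopologicalSpace α] [OrderTopology α] [DenselyOrdered α] [LinearOrder β] [TopologicalSpace β]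
    [OrderTopology β] {Γ : α → β} {Φ : β → α} (hΓ : StrictAnti Γ) (hΓΦ : LeftInverse Γ Φ)
    (hΦΓ : LeftInverse Φ Γ) : Continuous Φ := by
  have hΦ : Antitone Φ := fun a b hab => hΓ.le_iff_ge.1 (by rwa [hΓΦ a, hΓΦ b])
  exact continuous_ofDual.comp (hΦ.dual_right.continuous_of_surjective hΦΓ.surjective)

section PolicyExchange

variable {ι X : Type*} [TopologicalSpace ι] [MeasurableSpace X]

theorem exists_dense_seq_in [SecondCountableTopology ι] {K : Set ι} (hK : K.Nonempty) :
    ∃ u : ℕ → ι, (∀ n, u n ∈ K) ∧ K ⊆ closure (range u) := by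
  have : Nonempty K := hK.to_subtype
  obtain ⟨v, hv⟩ := exists_dense_seq K
  refine ⟨fun n => v n, fun n => (v n).2, ?_⟩
  rw [range_comp' Subtype.val v]
  exact Subtype.dense_iff.1 hv

theorem iSup_comp_eq_sSup_image {f : ι → ℝ} (hf : Continuous f) {K : Set ι}
    (hbdd : BddAbove (f '' K)) {u : ℕ → ι} (hu : ∀ n, u n ∈ K)
    (hdense : K ⊆ closure (range u)) :
    ⨆ n, f (u n) = sSup (f '' K) := by
  have hrange : range (fun n => f (u n)) ⊆ f '' K :=
    range_subset_iff.2 fun n => mem_image_of_mem f (hu n)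
  refine le_antisymm (csSup_le_csSup hbdd (range_nonempty _) hrange) ?_
  refine csSup_le ⟨f (u 0), mem_image_of_mem f (hu 0)⟩ ?_
  rintro _ ⟨q, hq, rfl⟩
  have hclosed : IsClosed {q | f q ≤ ⨆ n, f (u n)} := isClosed_le hf continuous_const
  refine closure_minimal ?_ hclosed (hdense hq)
  rintro _ ⟨n, rfl⟩
  exact le_ciSup (hbdd.mono hrange) n

theorem tendsto_partialSups_sSup_image {f : ι → ℝ} (hf : Continuous f) {K : Set ι}
    (hbdd : BddAbove (f '' K)) {u : ℕ → ι} (hu : ∀ n, u n ∈ K)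
    (hdense : K ⊆ closure (range u)) :
    Tendsto (fun n => partialSups (fun k => f (u k)) n) atTop (𝓝 (sSup (f '' K))) := by
  have hbdd_range : BddAbove (range fun k => f (u k)) :=
    hbdd.mono (range_subset_iff.2 fun n => mem_image_of_mem f (hu n))
  rw [← iSup_comp_eq_sSup_image hf hbdd hu hdense, ← ciSup_partialSups_eq hbdd_range]
  exact tendsto_atTop_ciSup (partialSups _).monotone (bddAbove_range_partialSups.2 hbdd_range)

theorem abs_le_sSup_abs_image {f : ι → ℝ} (hf : Continuous f) {K : Set ι} (hK : IsCompact K)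
    {q : ι} (hq : q ∈ K) : |f q| ≤ sSup ((fun q => |f q|) '' K) :=
  le_csSup (hK.image hf.abs).bddAbove (mem_image_of_mem _ hq)

theorem abs_sSup_image_le_sSup_abs_image {f : ι → ℝ} (hf : Continuous f) {K : Set ι}
    (hK : IsCompact K) (hKne : K.Nonempty) : |sSup (f '' K)| ≤ sSup ((fun q => |f q|) '' K) := by
  obtain ⟨q, hq, hmax⟩ := hK.exists_sSup_image_eq hKne hf.continuousOn
  rw [hmax]
  exact abs_le_sSup_abs_image hf hK hq

variable [MetrizableSpace ι] [SecondCountableTopology ι] [MeasurableSpace ι] [BorelSpace ι]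
  {F : ι → X → ℝ}

theorem measurable_comp_of_caratheodory (hFc : ∀ x, Continuous (F · x))
    (hFm : ∀ q, Measurable (F q)) {p : X → ι} (hp : Measurable p) :
    Measurable fun x => F (p x) x :=
  (measurable_uncurry_of_continuous_of_measurable hFc hFm).comp (hp.prodMk measurable_id)

theorem exists_measurable_eq_partialSups (hFc : ∀ x, Continuous (F · x))
    (hFm : ∀ q, Measurable (F q)) (u : ℕ → ι) (n : ℕ) :
    ∃ p : X → ι, Measurable p ∧ (∀ x, p x ∈ range u) ∧
      ∀ x, F (p x) x = partialSups (fun k => F (u k) x) n := by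
  induction n with
  | zero => exact ⟨fun _ => u 0, measurable_const, fun _ => ⟨0, rfl⟩, fun _ => rfl⟩
  | succ n ih =>
    obtain ⟨p, hp, hpu, hpF⟩ := ih
    have hset : MeasurableSet {x | F (u (n + 1)) x ≤ F (p x) x} :=
      measurableSet_le (hFm _) (measurable_comp_of_caratheodory hFc hFm hp)
    refine ⟨fun x => if F (u (n + 1)) x ≤ F (p x) x then p x else u (n + 1),
      hp.ite hset measurable_const, fun x => ?_, fun x => ?_⟩
    · dsimp only
      split_ifs
      exacts [hpu x, ⟨n + 1, rfl⟩]
    · rw [← Order.succ_eq_add_one, partialSups_succ, Order.succ_eq_add_one, ← hpF x]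
      dsimp only
      split_ifs with h
      exacts [(sup_eq_left.2 h).symm, (sup_eq_right.2 (not_le.1 h).le).symm]

theorem sSup_integral_policy_eq_integral_sSup (hFc : ∀ x, Continuous (F · x))
    (hFm : ∀ q, Measurable (F q)) {K : Set ι} (hK : IsCompact K) (hKne : K.Nonempty)
    {μ : Measure X} (henv : Integrable (fun x => sSup ((fun q => |F q x|) '' K)) μ) :
    sSup {r : ℝ | ∃ p : X → ι, Measurable p ∧ (∀ x, p x ∈ K) ∧ r = ∫ x, F (p x) x ∂μ}
      = ∫ x, sSup ((fun q => F q x) '' K) ∂μ := by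
  set g := fun x => sSup ((fun q => F q x) '' K)
  have hpolicy_int : ∀ p : X → ι, Measurable p → (∀ x, p x ∈ K) →
      Integrable (fun x => F (p x) x) μ := fun p hp hpK =>
    henv.mono' (measurable_comp_of_caratheodory hFc hFm hp).aestronglyMeasurable
      (ae_of_all _ fun x => abs_le_sSup_abs_image (hFc x) hK (hpK x))
  obtain ⟨u, huK, hdense⟩ := exists_dense_seq_in hKne
  choose p hp hpu hpF using exists_measurable_eq_partialSups (X := X) hFc hFm u
  have hpK : ∀ n x, p n x ∈ K := fun n x => range_subset_iff.2 huK (hpu n x)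
  have hlim : ∀ x, Tendsto (fun n => F (p n x) x) atTop (𝓝 (g x)) := fun x => by
    simpa only [hpF] using
      tendsto_partialSups_sSup_image (hFc x) (hK.image (hFc x)).bddAbove huK hdense
  have hg_meas : Measurable g := measurable_of_tendsto_metrizable
    (fun n => measurable_comp_of_caratheodory hFc hFm (hp n)) (tendsto_pi_nhds.2 hlim)
  have hg_int : Integrable g μ := henv.mono' hg_meas.aestronglyMeasurable
    (ae_of_all _ fun x => abs_sSup_image_le_sSup_abs_image (hFc x) hK hKne)
  have hle : ∀ r ∈ {r : ℝ | ∃ p : X → ι, Measurable p ∧ (∀ x, p x ∈ K) ∧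
      r = ∫ x, F (p x) x ∂μ}, r ≤ ∫ x, g x ∂μ := by
    rintro _ ⟨p, hp, hpK, rfl⟩
    exact integral_mono (hpolicy_int p hp hpK) hg_int fun x =>
      le_csSup (hK.image (hFc x)).bddAbove (mem_image_of_mem _ (hpK x))
  refine le_antisymm (csSup_le ⟨_, p 0, hp 0, hpK 0, rfl⟩ hle) ?_
  refine le_of_tendsto (tendsto_integral_of_dominated_convergence _
    (fun n => (hpolicy_int (p n) (hp n) (hpK n)).aestronglyMeasurable) henv
    (fun n => ae_of_all _ fun x => abs_le_sSup_abs_image (hFc x) hK (hpK n x))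
    (ae_of_all _ hlim)) (Eventually.of_forall fun n => ?_)
  exact le_csSup ⟨_, hle⟩ ⟨p n, hp n, hpK n, rfl⟩

end PolicyExchange

theorem stmt_15_general
    (Γ₁ Γ₂ Φ₁ Φ₂ : ℝ → ℝ)
    (hΓ₁a : StrictAnti Γ₁)
    (hΓ₂a : StrictAnti Γ₂)
    (hΦ₁l : ∀ y, Γ₁ (Φ₁ y) = y) (hΦ₁r : ∀ p, Φ₁ (Γ₁ p) = p)
    (hΦ₂l : ∀ y, Γ₂ (Φ₂ y) = y) (hΦ₂r : ∀ p, Φ₂ (Γ₂ p) = p)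
    (q_M : ℝ) (hq_M : 0 < q_M)
    (π₁ π₂ : Measure ℝ)
    (henv : Integrable
      (fun x : ℝ × ℝ =>
        sSup ((fun q : ℝ => |q * (Φ₂ (x.2 + q) - Φ₁ (x.1 - q))|) '' Set.Icc (0 : ℝ) q_M))
      (π₁.prod π₂)) :
    sSup {r : ℝ | ∃ p : ℝ × ℝ → ℝ, Measurable p ∧ (∀ x, p x ∈ Set.Icc (0 : ℝ) q_M) ∧
        r = ∫ x, p x * (Φ₂ (x.2 + p x) - Φ₁ (x.1 - p x)) ∂(π₁.prod π₂)}
      = ∫ x, sSup ((fun q : ℝ => q * (Φ₂ (x.2 + q) - Φ₁ (x.1 - q))) '' Set.Icc (0 : ℝ) q_M)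
          ∂(π₁.prod π₂) := by
  have hΦ₁ : Continuous Φ₁ := hΓ₁a.continuous_of_leftInverse hΦ₁l hΦ₁r
  have hΦ₂ : Continuous Φ₂ := hΓ₂a.continuous_of_leftInverse hΦ₂l hΦ₂r
  have hF : Continuous fun qx : ℝ × (ℝ × ℝ) =>
      qx.1 * (Φ₂ (qx.2.2 + qx.1) - Φ₁ (qx.2.1 - qx.1)) := by fun_prop
  exact sSup_integral_policy_eq_integral_sSup
    (fun x => hF.comp (continuous_id.prodMk continuous_const))
    (fun q => (hF.comp (continuous_const.prodMk continuous_id)).measurable)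
    isCompact_Icc (nonempty_Icc.2 hq_M.le) henv

/-- Supremum–integral exchange: for `μ = π₁ ⊗ π₂` with `π₁, π₂` absolutely continuous
probability measures and an integrable envelope, the supremum over Borel measurable
policies `q : ℝ² → [0, q_M]` of the expected revenue equals the integral of the pointwise
suprema of the revenue. -/
theorem stmt_15
    (Γ₁ Γ₂ Φ₁ Φ₂ : ℝ → ℝ)
    (hΓ₁c : Continuous Γ₁) (hΓ₁a : StrictAnti Γ₁) (hΓ₁s : Function.Surjective Γ₁)
    (hΓ₂c : Continuous Γ₂) (hΓ₂a : StrictAnti Γ₂) (hΓ₂s : Function.Surjective Γ₂)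
    (hΦ₁l : ∀ y, Γ₁ (Φ₁ y) = y) (hΦ₁r : ∀ p, Φ₁ (Γ₁ p) = p)
    (hΦ₂l : ∀ y, Γ₂ (Φ₂ y) = y) (hΦ₂r : ∀ p, Φ₂ (Γ₂ p) = p)
    (q_M : ℝ) (hq_M : 0 < q_M)
    (π₁ π₂ : Measure ℝ) [IsProbabilityMeasure π₁] [IsProbabilityMeasure π₂]
    (hπ₁ : π₁ ≪ volume) (hπ₂ : π₂ ≪ volume)
    (henv : Integrable
      (fun x : ℝ × ℝ =>
        sSup ((fun q : ℝ => |q * (Φ₂ (x.2 + q) - Φ₁ (x.1 - q))|) '' Set.Icc (0 : ℝ) q_M))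
      (π₁.prod π₂)) :
    sSup {r : ℝ | ∃ p : ℝ × ℝ → ℝ, Measurable p ∧ (∀ x, p x ∈ Set.Icc (0 : ℝ) q_M) ∧
        r = ∫ x, p x * (Φ₂ (x.2 + p x) - Φ₁ (x.1 - p x)) ∂(π₁.prod π₂)}
      = ∫ x, sSup ((fun q : ℝ => q * (Φ₂ (x.2 + q) - Φ₁ (x.1 - q))) '' Set.Icc (0 : ℝ) q_M)
          ∂(π₁.prod π₂) :=
  stmt_15_general Γ₁ Γ₂ Φ₁ Φ₂ hΓ₁a hΓ₂a hΦ₁l hΦ₁r hΦ₂l hΦ₂r q_M hq_M π₁ π₂ henv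
end

section
/- (Existence of an optimal storage policy.) Let π₁ and π₂ be probability measures on ℝ that are absolutely continuous with respect to Lebesgue measure, and let μ = π₁ ⊗ π₂ on ℝ². Assume the envelope (x₁, x₂) ↦ sup_{q ∈ [0, q_M]} |f(q; x₁, x₂)| is μ-integrable. Then there exists a Borel measurable policy q* : ℝ² → [0, q_M] such that for μ-almost every (x₁, x₂), f(q*(x₁, x₂); x₁, x₂) = sup_{q ∈ [0, q_M]} f(q; x₁, x₂); in particular, ∫ f(q*(x₁, x₂); x₁, x₂) dμ ≥ ∫ f(q(x₁, x₂); x₁, x₂) dμ for every Borel measurable policy q : ℝ² → [0, q_M]. -/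
/-!
The inverse demand functions `Φᵢ` are inverses of strictly antitone bijections, hence continuous,
so the revenue `f(q; x)` is jointly continuous. Its maximum over `[0, q_M]` is then continuous in
`x`, and the least maximizer `q*(x)` is Borel: `q*(x) ≤ t` exactly when the maximum over
`[0, min t q_M]` already equals the maximum over `[0, q_M]`, a closed condition in `x`. The policy
`q*` attains the supremum at every point, and the integrable envelope dominates the revenue of
every policy, so the expected revenues compare pointwise.
-/

open MeasureTheory Set

theorem Function.LeftInverse.continuous_of_strictAnti
    {α β : Type*} [LinearOrder α] [TopologicalSpace α] [OrderTopology α] [DenselyOrdered α]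
    [LinearOrder β] [TopologicalSpace β] [OrderTopology β] {Γ : α → β} {Φ : β → α}
    (hΓ : StrictAnti Γ) (hΓs : Function.Surjective Γ) (h : Function.LeftInverse Φ Γ) :
    Continuous Φ := by
  have hΦ : Monotone (OrderDual.toDual ∘ Φ) := by
    intro a b hab
    obtain ⟨p, rfl⟩ := hΓs a
    obtain ⟨p', rfl⟩ := hΓs b
    simpa [h p, h p'] using hΓ.le_iff_ge.mp hab
  exact continuous_ofDual.comp (hΦ.continuous_of_surjective fun p => ⟨Γ p, h p⟩)

section LeastMaximizer

variable {X : Type*} [TopologicalSpace X] {G : X → ℝ → ℝ} {a b : ℝ}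

noncomputable def leastMaximizer (G : X → ℝ → ℝ) (a b : ℝ) (x : X) : ℝ :=
  sInf {q ∈ Icc a b | IsMaxOn (G x) (Icc a b) q}

theorem isClosed_setOf_isMaxOn_Icc (hG : Continuous ↿G) (x : X) :
    IsClosed {q ∈ Icc a b | IsMaxOn (G x) (Icc a b) q} := by
  simp only [isMaxOn_iff, ofPred_and, ofPred_forall]
  exact isClosed_Icc.inter <| isClosed_biInter fun y _ =>
    isClosed_le continuous_const (hG.uncurry_left x)

theorem leastMaximizer_mem (hG : Continuous ↿G) (hab : a ≤ b) (x : X) :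
    leastMaximizer G a b x ∈ {q ∈ Icc a b | IsMaxOn (G x) (Icc a b) q} :=
  (isClosed_setOf_isMaxOn_Icc hG x).csInf_mem
    (isCompact_Icc.exists_isMaxOn (nonempty_Icc.mpr hab) (hG.uncurry_left x).continuousOn)
    ⟨a, fun _ hq => hq.1.1⟩

theorem apply_leastMaximizer (hG : Continuous ↿G) (hab : a ≤ b) (x : X) :
    G x (leastMaximizer G a b x) = sSup (G x '' Icc a b) := by
  obtain ⟨hmem, hmax⟩ := leastMaximizer_mem hG hab x
  exact (IsGreatest.csSup_eq
    ⟨mem_image_of_mem _ hmem, forall_mem_image.mpr (isMaxOn_iff.mp hmax)⟩).symm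

theorem leastMaximizer_le_iff (hG : Continuous ↿G) (hab : a ≤ b) {t : ℝ} (ht : a ≤ t) (x : X) :
    leastMaximizer G a b x ≤ t ↔ sSup (G x '' Icc a b) ≤ sSup (G x '' Icc a (min t b)) := by
  have hsub : Icc a (min t b) ⊆ Icc a b := Icc_subset_Icc_right (min_le_right t b)
  have hbdd : BddAbove (G x '' Icc a b) :=
    isCompact_Icc.bddAbove_image (hG.uncurry_left x).continuousOn
  obtain ⟨hmem, hmax⟩ := leastMaximizer_mem hG hab x
  constructor
  · intro hle
    rw [← apply_leastMaximizer hG hab x]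
    exact le_csSup (hbdd.mono (image_mono hsub)) ⟨_, ⟨hmem.1, le_min hle hmem.2⟩, rfl⟩
  · intro hle
    obtain ⟨q, hq, hqsup, -⟩ := isCompact_Icc.exists_sSup_image_eq_and_ge
      (nonempty_Icc.mpr (le_min ht hab)) (hG.uncurry_left x).continuousOn
    have hqmax : q ∈ {r ∈ Icc a b | IsMaxOn (G x) (Icc a b) r} := ⟨hsub hq, fun y hy =>
      (le_csSup hbdd (mem_image_of_mem _ hy)).trans (hle.trans hqsup.le)⟩
    exact (csInf_le ⟨a, fun _ hr => hr.1.1⟩ hqmax).trans (hq.2.trans (min_le_left t b))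

theorem measurable_leastMaximizer [MeasurableSpace X] [OpensMeasurableSpace X]
    (hG : Continuous ↿G) (hab : a ≤ b) :
    Measurable (leastMaximizer G a b) := by
  refine measurable_of_Iic fun t => ?_
  rcases lt_or_ge t a with ht | ht
  · convert MeasurableSet.empty
    exact eq_empty_of_forall_notMem fun x hx =>
      ht.not_ge <| (leastMaximizer_mem hG hab x).1.1.trans hx
  · have : leastMaximizer G a b ⁻¹' Iic t =
        {x | sSup (G x '' Icc a b) ≤ sSup (G x '' Icc a (min t b))} :=
      ext fun x => leastMaximizer_le_iff hG hab ht x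
    rw [this]
    exact (isClosed_le (isCompact_Icc.continuous_sSup hG)
      (isCompact_Icc.continuous_sSup hG)).measurableSet

end LeastMaximizer

theorem integrable_apply_of_integrable_sSup_abs {X : Type*} [TopologicalSpace X]
    [MeasurableSpace X] [OpensMeasurableSpace X] {μ : Measure X} {G : X → ℝ → ℝ} {a b : ℝ}
    (hG : Continuous ↿G) {p : X → ℝ} (hp : Measurable p) (hpI : ∀ x, p x ∈ Icc a b)
    (henv : Integrable (fun x => sSup ((fun q => |G x q|) '' Icc a b)) μ) :
    Integrable (fun x => G x (p x)) μ :=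
  henv.mono' (hG.measurable.comp (measurable_id.prodMk hp)).aestronglyMeasurable <|
    .of_forall fun x => le_csSup
      (isCompact_Icc.bddAbove_image (hG.uncurry_left x).abs.continuousOn)
      (mem_image_of_mem _ (hpI x))

theorem stmt_16_general
    (Γ₁ Γ₂ Φ₁ Φ₂ : ℝ → ℝ)
    (hΓ₁a : StrictAnti Γ₁) (hΓ₁s : Function.Surjective Γ₁)
    (hΓ₂a : StrictAnti Γ₂) (hΓ₂s : Function.Surjective Γ₂)
    (hΦ₁r : ∀ p, Φ₁ (Γ₁ p) = p) (hΦ₂r : ∀ p, Φ₂ (Γ₂ p) = p)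
    (q_M : ℝ) (hq_M : 0 < q_M)
    (π₁ π₂ : Measure ℝ)
    (henv : Integrable
      (fun x : ℝ × ℝ =>
        sSup ((fun q : ℝ => |q * (Φ₂ (x.2 + q) - Φ₁ (x.1 - q))|) '' Set.Icc (0 : ℝ) q_M))
      (π₁.prod π₂)) :
    ∃ ps : ℝ × ℝ → ℝ, Measurable ps ∧ (∀ x, ps x ∈ Set.Icc (0 : ℝ) q_M) ∧
      (∀ᵐ x ∂(π₁.prod π₂),
        ps x * (Φ₂ (x.2 + ps x) - Φ₁ (x.1 - ps x))
          = sSup ((fun q : ℝ => q * (Φ₂ (x.2 + q) - Φ₁ (x.1 - q))) '' Set.Icc (0 : ℝ) q_M)) ∧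
      (∀ p : ℝ × ℝ → ℝ, Measurable p → (∀ x, p x ∈ Set.Icc (0 : ℝ) q_M) →
        ∫ x, p x * (Φ₂ (x.2 + p x) - Φ₁ (x.1 - p x)) ∂(π₁.prod π₂)
          ≤ ∫ x, ps x * (Φ₂ (x.2 + ps x) - Φ₁ (x.1 - ps x)) ∂(π₁.prod π₂)) := by
  have hΦ₁ : Continuous Φ₁ := Function.LeftInverse.continuous_of_strictAnti hΓ₁a hΓ₁s hΦ₁r
  have hΦ₂ : Continuous Φ₂ := Function.LeftInverse.continuous_of_strictAnti hΓ₂a hΓ₂s hΦ₂r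
  set G : ℝ × ℝ → ℝ → ℝ := fun x q => q * (Φ₂ (x.2 + q) - Φ₁ (x.1 - q))
  have hG : Continuous ↿G := by
    change Continuous fun z : (ℝ × ℝ) × ℝ => z.2 * (Φ₂ (z.1.2 + z.2) - Φ₁ (z.1.1 - z.2))
    fun_prop
  have hps := measurable_leastMaximizer hG hq_M.le
  have hps_mem := leastMaximizer_mem hG hq_M.le
  refine ⟨leastMaximizer G 0 q_M, hps, fun x => (hps_mem x).1,
    .of_forall (apply_leastMaximizer hG hq_M.le), fun p hp hpI => ?_⟩
  exact integral_mono (integrable_apply_of_integrable_sSup_abs hG hp hpI henv)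
    (integrable_apply_of_integrable_sSup_abs hG hps (fun x => (hps_mem x).1) henv)
    fun x => (hps_mem x).2 (hpI x)

/-- Existence of an optimal storage policy: there is a Borel measurable policy
`q* : ℝ² → [0, q_M]` attaining, `μ`-a.e., the pointwise supremum of the revenue; in
particular its expected revenue dominates that of every Borel measurable policy. -/
theorem stmt_16
    (Γ₁ Γ₂ Φ₁ Φ₂ : ℝ → ℝ)
    (hΓ₁c : Continuous Γ₁) (hΓ₁a : StrictAnti Γ₁) (hΓ₁s : Function.Surjective Γ₁)
    (hΓ₂c : Continuous Γ₂) (hΓ₂a : StrictAnti Γ₂) (hΓ₂s : Function.Surjective Γ₂)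
    (hΦ₁l : ∀ y, Γ₁ (Φ₁ y) = y) (hΦ₁r : ∀ p, Φ₁ (Γ₁ p) = p)
    (hΦ₂l : ∀ y, Γ₂ (Φ₂ y) = y) (hΦ₂r : ∀ p, Φ₂ (Γ₂ p) = p)
    (q_M : ℝ) (hq_M : 0 < q_M)
    (π₁ π₂ : Measure ℝ) [IsProbabilityMeasure π₁] [IsProbabilityMeasure π₂]
    (hπ₁ : π₁ ≪ volume) (hπ₂ : π₂ ≪ volume)
    (henv : Integrable
      (fun x : ℝ × ℝ =>
        sSup ((fun q : ℝ => |q * (Φ₂ (x.2 + q) - Φ₁ (x.1 - q))|) '' Set.Icc (0 : ℝ) q_M))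
      (π₁.prod π₂)) :
    ∃ ps : ℝ × ℝ → ℝ, Measurable ps ∧ (∀ x, ps x ∈ Set.Icc (0 : ℝ) q_M) ∧
      (∀ᵐ x ∂(π₁.prod π₂),
        ps x * (Φ₂ (x.2 + ps x) - Φ₁ (x.1 - ps x))
          = sSup ((fun q : ℝ => q * (Φ₂ (x.2 + q) - Φ₁ (x.1 - q))) '' Set.Icc (0 : ℝ) q_M)) ∧
      (∀ p : ℝ × ℝ → ℝ, Measurable p → (∀ x, p x ∈ Set.Icc (0 : ℝ) q_M) →
        ∫ x, p x * (Φ₂ (x.2 + p x) - Φ₁ (x.1 - p x)) ∂(π₁.prod π₂)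
          ≤ ∫ x, ps x * (Φ₂ (x.2 + ps x) - Φ₁ (x.1 - ps x)) ∂(π₁.prod π₂)) :=
  stmt_16_general Γ₁ Γ₂ Φ₁ Φ₂ hΓ₁a hΓ₁s hΓ₂a hΓ₂s hΦ₁r hΦ₂r q_M hq_M π₁ π₂ henv
end
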